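/- Let $\alpha>0$, $\rho_\alpha(x,z)=\big((\alpha+1)^2|x|^2+|z|^{2(\alpha+1)}\big)^{\frac{1}{2(\alpha+1)}}$, and $\psi_\alpha=|z|^{2\alpha}/\rho_\alpha^{2\alpha}$. Then for every $C^1$ function $u$ and every point of $\mathbb{R}^{n+1}\setminus\{0\}$ one has $\langle\nabla_\alpha u,\nabla_\alpha\rho_\alpha\rangle = \frac{Z_\alpha u}{\rho_\alpha}\,\psi_\alpha$, where $\langle\nabla_\alpha u,\nabla_\alpha v\rangle=|z|^{2\alpha}\langle\nabla_x u,\nabla_x v\rangle + D_z u\, D_z v$ and $Z_\alpha u=(\alpha+1)\langle x,\nabla_x u\rangle + z D_z u$. -/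

import Mathlib

/-!
Writing `ρ_α ^ (2(α+1)) = (α+1)²|x|² + |z|^(2(α+1))` and differentiating gives
`∇ₓρ_α = (α+1) x / ρ_α^(2α+1)` and `D_z ρ_α = |z|^(2α) z / ρ_α^(2α+1)`. The weight `|z|^(2α)`
in front of the `x`-gradients thus appears in both terms of `⟨∇_α u, ∇_α ρ_α⟩`, which becomes
`|z|^(2α) ((α+1)⟨x, ∇ₓu⟩ + z D_z u) / ρ_α^(2α+1) = (Z_α u / ρ_α) ψ_α`.
-/

open Real

theorem ContinuousLinearMap.apply_prod_eq_sum {ι : Type*} [Fintype ι] [DecidableEq ι]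
    (L : ((ι → ℝ) × ℝ) →L[ℝ] ℝ) (v : ι → ℝ) (t : ℝ) :
    L (v, t) = ∑ i, v i * L (Pi.single i 1, 0) + t * L (0, 1) := by
  have hsplit : (v, t) = ∑ i, v i • ((Pi.single i 1 : ι → ℝ), (0 : ℝ)) + t • (0, 1) := by
    ext <;> simp [Prod.fst_sum, Prod.snd_sum, Finset.sum_apply, Pi.single_apply]
  rw [hsplit, map_add, map_sum, map_smul]
  simp only [map_smul, smul_eq_mul]

theorem hasDerivAt_abs_rpow_two_mul {a : ℝ} (ha : 0 ≤ a) (z : ℝ) :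
    HasDerivAt (fun w : ℝ => |w| ^ (2 * (a + 1))) (2 * (a + 1) * (|z| ^ (2 * a) * z)) z := by
  have abs_rpow_two_mul (w t : ℝ) : |w| ^ (2 * t) = (w ^ 2) ^ t := by
    rw [rpow_mul (abs_nonneg w), rpow_two, sq_abs]
  simp only [abs_rpow_two_mul]
  have hsq : HasDerivAt (fun w : ℝ => w ^ 2) (2 * z) z := by simpa using hasDerivAt_pow 2 z
  have hpow := hasDerivAt_rpow_const (x := z ^ 2) (p := a + 1) (Or.inr (by linarith))
  rw [add_sub_cancel_right] at hpow
  exact (hpow.comp (h := fun w : ℝ => w ^ 2) z hsq).congr_deriv (by ring)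

namespace Grushin

variable {ι : Type*} [Fintype ι] (α : ℝ)

noncomputable def pseudoGaugePow (p : (ι → ℝ) × ℝ) : ℝ :=
  (α + 1) ^ 2 * ∑ i, p.1 i ^ 2 + |p.2| ^ (2 * (α + 1))

noncomputable def pseudoGauge (p : (ι → ℝ) × ℝ) : ℝ :=
  pseudoGaugePow α p ^ (1 / (2 * (α + 1)))

/-- `ρ_α^(2α+1) ∇ρ_α` at `p`, as a linear form. -/
noncomputable def gaugeForm (p : (ι → ℝ) × ℝ) : ((ι → ℝ) × ℝ) →L[ℝ] ℝ :=
  (α + 1) • ∑ i, p.1 i • (ContinuousLinearMap.proj i).comp (ContinuousLinearMap.fst ℝ (ι → ℝ) ℝ)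
    + (|p.2| ^ (2 * α) * p.2) • ContinuousLinearMap.snd ℝ (ι → ℝ) ℝ

@[simp]
theorem gaugeForm_apply (p v : (ι → ℝ) × ℝ) :
    gaugeForm α p v = (α + 1) * ∑ i, p.1 i * v.1 i + |p.2| ^ (2 * α) * p.2 * v.2 := by
  simp [gaugeForm]

variable {α}

theorem gaugeForm_apply_single_zero [DecidableEq ι] (p : (ι → ℝ) × ℝ) (i : ι) :
    gaugeForm α p (Pi.single i 1, 0) = (α + 1) * p.1 i := by
  simp [Pi.single_apply]

theorem gaugeForm_apply_zero_one (p : (ι → ℝ) × ℝ) :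
    gaugeForm α p (0, 1) = |p.2| ^ (2 * α) * p.2 := by
  simp

theorem gaugeForm_pairing [DecidableEq ι] (L : ((ι → ℝ) × ℝ) →L[ℝ] ℝ) (p : (ι → ℝ) × ℝ) :
    |p.2| ^ (2 * α) * ∑ i, L (Pi.single i 1, 0) * gaugeForm α p (Pi.single i 1, 0)
        + L (0, 1) * gaugeForm α p (0, 1)
      = |p.2| ^ (2 * α) * L ((α + 1) • p.1, p.2) := by
  rw [L.apply_prod_eq_sum ((α + 1) • p.1) p.2]
  simp only [gaugeForm_apply_single_zero, gaugeForm_apply_zero_one, Pi.smul_apply, smul_eq_mul]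
  rw [Finset.sum_congr rfl fun i _ => mul_comm (L (Pi.single i 1, 0)) _]
  ring

theorem pseudoGaugePow_pos (hα : α ≠ -1) {p : (ι → ℝ) × ℝ} (hp : p ≠ 0) :
    0 < pseudoGaugePow α p := by
  have hα' : 0 < (α + 1) ^ 2 := by
    have : α + 1 ≠ 0 := fun h => hα (by linarith)
    positivity
  obtain ⟨x, z⟩ := p
  by_cases hz : z = 0
  · obtain ⟨i, hi⟩ : ∃ i, x i ≠ 0 := by
      by_contra! h
      exact hp (Prod.ext (funext h) hz)
    have : 0 < ∑ i, x i ^ 2 :=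
      Finset.sum_pos' (fun j _ => sq_nonneg _) ⟨i, Finset.mem_univ i, by positivity⟩
    have : 0 ≤ |z| ^ (2 * (α + 1)) := by positivity
    unfold pseudoGaugePow
    positivity
  · have : 0 < |z| ^ (2 * (α + 1)) := by positivity
    unfold pseudoGaugePow
    positivity

theorem hasFDerivAt_pseudoGaugePow (hα : 0 ≤ α) (p : (ι → ℝ) × ℝ) :
    HasFDerivAt (pseudoGaugePow α) ((2 * (α + 1)) • gaugeForm α p) p := by
  have hcoord (i : ι) : HasFDerivAt (fun q : (ι → ℝ) × ℝ => q.1 i ^ 2)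
      ((2 * p.1 i) • (ContinuousLinearMap.proj i).comp (ContinuousLinearMap.fst ℝ (ι → ℝ) ℝ)) p := by
    have hsq : HasDerivAt (fun t : ℝ => t ^ 2) (2 * p.1 i) (p.1 i) := by
      simpa using hasDerivAt_pow 2 (p.1 i)
    exact hsq.comp_hasFDerivAt p
      ((ContinuousLinearMap.proj i).comp (ContinuousLinearMap.fst ℝ (ι → ℝ) ℝ)).hasFDerivAt
  have hx := (HasFDerivAt.fun_sum (u := Finset.univ) fun i _ => hcoord i).const_mul ((α + 1) ^ 2)
  have hz := (hasDerivAt_abs_rpow_two_mul hα p.2).comp_hasFDerivAt p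
    (hasFDerivAt_snd (𝕜 := ℝ) (p := p))
  refine (hx.add hz).congr_fderiv (ContinuousLinearMap.ext fun v => ?_)
  simp [mul_assoc, ← Finset.mul_sum]
  ring

theorem hasFDerivAt_pseudoGauge (hα : 0 ≤ α) {p : (ι → ℝ) × ℝ} (hp : p ≠ 0) :
    HasFDerivAt (pseudoGauge α) ((pseudoGauge α p ^ (2 * α + 1))⁻¹ • gaugeForm α p) p := by
  have hG := pseudoGaugePow_pos (by linarith) hp
  have hα1 : 2 * (α + 1) ≠ 0 := by positivity
  have hroot := (hasDerivAt_rpow_const (p := 1 / (2 * (α + 1))) (Or.inl hG.ne')).comp_hasFDerivAt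
    p (hasFDerivAt_pseudoGaugePow hα p)
  refine hroot.congr_fderiv ?_
  rw [smul_smul, pseudoGauge, ← rpow_mul hG.le, ← rpow_neg hG.le]
  congr 1
  rw [mul_comm, ← mul_assoc, mul_one_div_cancel hα1, one_mul]
  congr 1
  field_simp
  ring

end Grushin

open Grushin

theorem stmt7_general (n : ℕ) (α : ℝ) (hα : 0 < α)
    (ρ : (Fin n → ℝ) × ℝ → ℝ)
    (hρ : ∀ p : (Fin n → ℝ) × ℝ,
      ρ p = ((α + 1) ^ 2 * (∑ i : Fin n, p.1 i ^ 2) + |p.2| ^ (2 * (α + 1)))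
              ^ (1 / (2 * (α + 1))))
    (u : (Fin n → ℝ) × ℝ → ℝ) :
    ∀ p : (Fin n → ℝ) × ℝ, p ≠ 0 →
      |p.2| ^ (2 * α) *
            (∑ i : Fin n, fderiv ℝ u p (Pi.single i 1, 0) * fderiv ℝ ρ p (Pi.single i 1, 0))
          + fderiv ℝ u p (0, 1) * fderiv ℝ ρ p (0, 1)
        = (fderiv ℝ u p ((α + 1) • p.1, p.2) / ρ p) * (|p.2| ^ (2 * α) / (ρ p) ^ (2 * α)) := by
  intro p hp
  obtain rfl : ρ = pseudoGauge α := funext hρ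
  have hρ_pos : 0 < pseudoGauge α p := rpow_pos_of_pos (pseudoGaugePow_pos (by linarith) hp) _
  simp only [(hasFDerivAt_pseudoGauge hα.le hp).fderiv, smul_apply, smul_eq_mul,
    mul_left_comm _ (pseudoGauge α p ^ (2 * α + 1))⁻¹, ← Finset.mul_sum, ← mul_add]
  rw [gaugeForm_pairing, rpow_add_one hρ_pos.ne']
  field_simp

/-- for `α > 0`, `ρ_α` the pseudo-gauge, `ψ_α = |z|^{2α}/ρ_α^{2α}`, and every
`C¹` function `u`, one has on `ℝ^{n+1} \ {0}`:
`⟨∇_α u, ∇_α ρ_α⟩ = (Z_α u / ρ_α) ψ_α`, where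
`⟨∇_α u, ∇_α v⟩ = |z|^{2α} ⟨∇ₓu, ∇ₓv⟩ + D_z u D_z v` and
`Z_α u = (α+1)⟨x, ∇ₓu⟩ + z D_z u`. -/
theorem stmt7 (n : ℕ) (α : ℝ) (hα : 0 < α)
    (ρ : (Fin n → ℝ) × ℝ → ℝ)
    (hρ : ∀ p : (Fin n → ℝ) × ℝ,
      ρ p = ((α + 1) ^ 2 * (∑ i : Fin n, p.1 i ^ 2) + |p.2| ^ (2 * (α + 1)))
              ^ (1 / (2 * (α + 1))))
    (u : (Fin n → ℝ) × ℝ → ℝ) (hu : ContDiff ℝ 1 u) :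
    ∀ p : (Fin n → ℝ) × ℝ, p ≠ 0 →
      |p.2| ^ (2 * α) *
            (∑ i : Fin n, fderiv ℝ u p (Pi.single i 1, 0) * fderiv ℝ ρ p (Pi.single i 1, 0))
          + fderiv ℝ u p (0, 1) * fderiv ℝ ρ p (0, 1)
        = (fderiv ℝ u p ((α + 1) • p.1, p.2) / ρ p) * (|p.2| ^ (2 * α) / (ρ p) ^ (2 * α)) :=
  stmt7_general n α hα ρ hρ u
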